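/- arXiv:1508.04194 — 2 statements merged into one kernel-verified Lean document; each statement's English description precedes it below -/
import Mathlib

section
/- The scaling limiter preserves bounds: given a function p on a set K, its mean value ū with m ≤ ū ≤ M, M_K = sup of p on K, m_K = inf of p on K (with m_K ≤ ū ≤ M_K), and θ = min(1, |M - ū|/|M_K - ū|, |m - ū|/|m_K - ū|), the modified function p̃(x) = θ(p(x) - ū) + ū satisfies m ≤ p̃(x) ≤ M for all x in K. -/
theorem scaling_limiter_preserves_bounds {α : Type*} (K : Set α) (hK : K.Nonempty)
    (p : α → ℝ) (MK mK ubar m M : ℝ)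
    (hub : ∀ x ∈ K, p x ≤ MK) (hlb : ∀ x ∈ K, mK ≤ p x)
    (h1 : mK < ubar) (h2 : ubar < MK)
    (hm : m ≤ ubar) (hM : ubar ≤ M) (hmM : m < M)
    (θ : ℝ)
    (hθ : θ = min 1 (min (|M - ubar| / |MK - ubar|) (|m - ubar| / |mK - ubar|))) :
    ∀ x ∈ K, m ≤ θ * (p x - ubar) + ubar ∧ θ * (p x - ubar) + ubar ≤ M := by
  intro x hx
  have hMK : 0 < MK - ubar := by linarith
  have hmK : 0 < ubar - mK := by linarith
  have hθ0 : 0 ≤ θ := by rw [hθ]; positivity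
  have habs1 : |M - ubar| = M - ubar := abs_of_nonneg (by linarith)
  have habs2 : |MK - ubar| = MK - ubar := abs_of_nonneg (by linarith)
  have habs3 : |m - ubar| = ubar - m := by rw [abs_of_nonpos (by linarith)]; ring
  have habs4 : |mK - ubar| = ubar - mK := by rw [abs_of_nonpos (by linarith)]; ring
  have hθM : θ ≤ (M - ubar) / (MK - ubar) := by
    rw [hθ, habs1, habs2]
    exact le_trans (min_le_right _ _) (min_le_left _ _)
  have hθm : θ ≤ (ubar - m) / (ubar - mK) := by
    rw [hθ, habs3, habs4]
    exact le_trans (min_le_right _ _) (min_le_right _ _)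
  have hM' : θ * (MK - ubar) ≤ M - ubar := (le_div_iff₀ hMK).mp hθM
  have hm' : θ * (ubar - mK) ≤ ubar - m := (le_div_iff₀ hmK).mp hθm
  have hup := mul_le_mul_of_nonneg_left (show p x - ubar ≤ MK - ubar by
    have := hub x hx; linarith) hθ0
  have hlo := mul_le_mul_of_nonneg_left (show mK - ubar ≤ p x - ubar by
    have := hlb x hx; linarith) hθ0
  constructor <;> nlinarith
end

section
/- Averaging the three square-to-triangle projections yields a quadrature rule on the triangle exact for quadratics: if a tensor-product rule with points (ûᵅ, vᵝ) and weights ŵᵅwᵝ on the square integrates exactly any function of the form q(u,v)·2(1/2 - v) with q of degree ≤ (2,2), then for any quadratic polynomial p on triangle K, (1/|K|)∫_K p = Σᵢ₌₁³ Σᵅ Σᵝ p(gᵢ(ûᵅ, vᵝ)) · (2/3)(1/2 - vᵝ) ŵᵅ wᵝ. -/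
open MeasureTheory

/-- The square-to-triangle projection collapsing the top edge of
`[-1/2,1/2]²` to the vertex `V₁`. -/
noncomputable def squareToTriangleMap (V₁ V₂ V₃ : ℝ × ℝ) (u v : ℝ) : ℝ × ℝ :=
  (1/2 + v) • V₁ + ((1/2 + u) * (1/2 - v)) • V₂ + ((1/2 - u) * (1/2 - v)) • V₃

namespace TriQuadAux

open MvPolynomial

/-- A coordinate of the square-to-triangle map as a polynomial in `(u,v)`. -/
noncomputable def coordPoly (a b c : ℝ) : MvPolynomial (Fin 2) ℝ :=
  C a * (C (1/2) + X 1) + C b * ((C (1/2) + X 0) * (C (1/2) + C (-1) * X 1))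
    + C c * ((C (1/2) + C (-1) * X 0) * (C (1/2) + C (-1) * X 1))

lemma degreeOf_fac_le (j k : Fin 2) :
    ((C (1/2) + C (-1) * X j : MvPolynomial (Fin 2) ℝ)).degreeOf k
      ≤ if k = j then 1 else 0 := by
  refine (degreeOf_add_le _ _ _).trans ?_
  simp only [degreeOf_C, max_le_iff]
  refine ⟨by positivity, (degreeOf_mul_le _ _ _).trans ?_⟩
  rw [degreeOf_C, zero_add, degreeOf_X]

lemma degreeOf_coordPoly_le (a b c : ℝ) (k : Fin 2) : (coordPoly a b c).degreeOf k ≤ 1 := by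
  have hprod : ∀ x y : ℝ,
      ((C x * ((C (1/2) + C (-1) * X 0) * (C (1/2) + C (-1) * X 1))
        : MvPolynomial (Fin 2) ℝ)).degreeOf k ≤ 1 ∧
      ((C y * ((C (1/2) + X 0) * (C (1/2) + C (-1) * X 1))
        : MvPolynomial (Fin 2) ℝ)).degreeOf k ≤ 1 := by
    intro x y
    have h0 := degreeOf_fac_le 0 k
    have h1 := degreeOf_fac_le 1 k
    have h0' : ((C (1/2) + X 0 : MvPolynomial (Fin 2) ℝ)).degreeOf k
        ≤ if k = 0 then 1 else 0 := by
      have := degreeOf_fac_le 0 k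
      refine (degreeOf_add_le _ _ _).trans ?_
      simp only [degreeOf_C, max_le_iff]
      refine ⟨by positivity, ?_⟩
      rw [degreeOf_X]
    constructor
    · refine (degreeOf_mul_le _ _ _).trans ?_
      rw [degreeOf_C, zero_add]
      refine (degreeOf_mul_le _ _ _).trans ?_
      fin_cases k <;> simp_all <;> omega
    · refine (degreeOf_mul_le _ _ _).trans ?_
      rw [degreeOf_C, zero_add]
      refine (degreeOf_mul_le _ _ _).trans ?_
      fin_cases k <;> simp_all <;> omega
  have hA : ((C a * (C (1/2) + X 1) : MvPolynomial (Fin 2) ℝ)).degreeOf k ≤ 1 := by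
    refine (degreeOf_mul_le _ _ _).trans ?_
    rw [degreeOf_C, zero_add]
    refine (degreeOf_add_le _ _ _).trans ?_
    simp only [degreeOf_C, max_le_iff]
    refine ⟨by positivity, ?_⟩
    rw [degreeOf_X]
    split <;> omega
  rw [coordPoly]
  refine (degreeOf_add_le _ _ _).trans (max_le ((degreeOf_add_le _ _ _).trans
    (max_le hA (hprod a b).2)) (hprod c c).1)

lemma eval_coordPoly (a b c u v : ℝ) :
    eval ![u, v] (coordPoly a b c)
      = a * (1/2 + v) + b * ((1/2 + u) * (1/2 - v)) + c * ((1/2 - u) * (1/2 - v)) := by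
  simp [coordPoly]
  ring

lemma degreeOf_bind₁_le {p : MvPolynomial (Fin 2) ℝ} (f : Fin 2 → MvPolynomial (Fin 2) ℝ)
    (k : Fin 2) (hf : ∀ j, (f j).degreeOf k ≤ 1) :
    (bind₁ f p).degreeOf k ≤ p.totalDegree := by
  conv_lhs => rw [p.as_sum, map_sum]
  refine (degreeOf_sum_le _ _ _).trans ?_
  rw [Finset.sup_le_iff]
  intro d hd
  rw [bind₁_monomial]
  refine (degreeOf_mul_le _ _ _).trans ?_
  rw [degreeOf_C, zero_add]
  refine (degreeOf_prod_le _ _ _).trans ?_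
  refine le_trans (Finset.sum_le_sum (fun i _ => (degreeOf_pow_le _ _ _).trans
    (Nat.mul_le_mul_left _ (hf i)))) ?_
  simp only [mul_one]
  refine le_trans ?_ (le_totalDegree hd)
  rw [Finsupp.sum_fintype _ _ (fun _ => rfl)]
  exact Finset.sum_le_sum_of_subset (Finset.subset_univ _)

lemma fst_map (A B C : ℝ × ℝ) (u v : ℝ) :
    (squareToTriangleMap A B C u v).1
      = (1/2 + v) * A.1 + ((1/2 + u) * (1/2 - v)) * B.1 + ((1/2 - u) * (1/2 - v)) * C.1 := by
  simp [squareToTriangleMap]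

lemma snd_map (A B C : ℝ × ℝ) (u v : ℝ) :
    (squareToTriangleMap A B C u v).2
      = (1/2 + v) * A.2 + ((1/2 + u) * (1/2 - v)) * B.2 + ((1/2 - u) * (1/2 - v)) * C.2 := by
  simp [squareToTriangleMap]

/-- The composed polynomial `p ∘ g`. -/
noncomputable def compPoly (A B C : ℝ × ℝ) (p : MvPolynomial (Fin 2) ℝ) :
    MvPolynomial (Fin 2) ℝ :=
  bind₁ ![coordPoly A.1 B.1 C.1, coordPoly A.2 B.2 C.2] p

lemma eval_compPoly (A B C : ℝ × ℝ) (p : MvPolynomial (Fin 2) ℝ) (u v : ℝ) :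
    eval ![u, v] (compPoly A B C p)
      = eval ![(squareToTriangleMap A B C u v).1, (squareToTriangleMap A B C u v).2] p := by
  have h := aeval_bind₁ (R := ℝ) ![u, v] ![coordPoly A.1 B.1 C.1, coordPoly A.2 B.2 C.2] p
  have hco : ∀ (x : Fin 2 → ℝ) (q : MvPolynomial (Fin 2) ℝ), aeval x q = eval x q := by
    intro x q
    rw [← coe_aeval_eq_eval]
    rfl
  have harg : (fun i => (aeval (R := ℝ) ![u, v]) (![coordPoly A.1 B.1 C.1, coordPoly A.2 B.2 C.2] i))
      = ![(squareToTriangleMap A B C u v).1, (squareToTriangleMap A B C u v).2] := by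
    funext i
    fin_cases i <;>
      simp [hco, eval_coordPoly, fst_map, snd_map] <;> ring
  rw [compPoly, ← hco, ← hco, h, harg]

lemma degreeOf_compPoly_le (A B C : ℝ × ℝ) (p : MvPolynomial (Fin 2) ℝ) (k : Fin 2) :
    (compPoly A B C p).degreeOf k ≤ p.totalDegree := by
  refine degreeOf_bind₁_le _ _ ?_
  intro j
  fin_cases j <;> simpa using degreeOf_coordPoly_le _ _ _ k

lemma segment_null (A B : ℝ × ℝ) : volume (segment ℝ A B) = 0 := by
  have h1 : segment ℝ A B ⊆ (affineSpan ℝ ({A, B} : Set (ℝ × ℝ)) : Set (ℝ × ℝ)) := by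
    rw [← convexHull_pair]; exact convexHull_subset_affineSpan _
  refine measure_mono_null h1 (Measure.addHaar_affineSubspace _ _ ?_)
  intro h
  have hd : (affineSpan ℝ ({A, B} : Set (ℝ × ℝ))).direction = ⊤ := by
    rw [h]; exact AffineSubspace.direction_top ℝ _ _
  rw [direction_affineSpan, vectorSpan_pair] at hd
  have : Module.finrank ℝ (ℝ × ℝ) ≤ 1 := by
    rw [← finrank_top ℝ (ℝ × ℝ), ← hd]
    simpa using finrank_span_le_card ({A -ᵥ B} : Set (ℝ × ℝ))
  simp at this

lemma det_clm (e f : ℝ × ℝ) :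
    (((ContinuousLinearMap.fst ℝ ℝ ℝ).smulRight e +
      (ContinuousLinearMap.snd ℝ ℝ ℝ).smulRight f) : ℝ × ℝ →L[ℝ] ℝ × ℝ).det
      = e.1 * f.2 - e.2 * f.1 := by
  have h : (((ContinuousLinearMap.fst ℝ ℝ ℝ).smulRight e +
      (ContinuousLinearMap.snd ℝ ℝ ℝ).smulRight f) : ℝ × ℝ →L[ℝ] ℝ × ℝ).toLinearMap
      = Matrix.toLin (Module.Basis.finTwoProd ℝ) (Module.Basis.finTwoProd ℝ) !![e.1, f.1; e.2, f.2] := by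
    apply LinearMap.ext
    intro x
    simp [Matrix.toLin_finTwoProd_apply, Prod.ext_iff, smul_eq_mul]
    constructor <;> ring
  rw [ContinuousLinearMap.det, h, LinearMap.det_toLin, Matrix.det_fin_two_of]
  ring

/-- The derivative of the square-to-triangle map. -/
noncomputable def Jmap (A B C : ℝ × ℝ) (z : ℝ × ℝ) : ℝ × ℝ →L[ℝ] ℝ × ℝ :=
  (ContinuousLinearMap.fst ℝ ℝ ℝ).smulRight ((1/2 - z.2) • (B - C)) +
  (ContinuousLinearMap.snd ℝ ℝ ℝ).smulRight (A - (1/2 + z.1) • B - (1/2 - z.1) • C)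

lemma hasFDerivAt_G (A B C : ℝ × ℝ) (z : ℝ × ℝ) :
    HasFDerivAt (fun z : ℝ × ℝ => squareToTriangleMap A B C z.1 z.2) (Jmap A B C z) z := by
  have h1 : HasFDerivAt (fun z : ℝ × ℝ => 1/2 + z.2)
      (ContinuousLinearMap.snd ℝ ℝ ℝ) z := (hasFDerivAt_snd).const_add _
  have h2 : HasFDerivAt (fun z : ℝ × ℝ => 1/2 + z.1)
      (ContinuousLinearMap.fst ℝ ℝ ℝ) z := (hasFDerivAt_fst).const_add _
  have h3 : HasFDerivAt (fun z : ℝ × ℝ => 1/2 - z.2)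
      (-ContinuousLinearMap.snd ℝ ℝ ℝ) z := (hasFDerivAt_snd).const_sub _
  have h4 : HasFDerivAt (fun z : ℝ × ℝ => 1/2 - z.1)
      (-ContinuousLinearMap.fst ℝ ℝ ℝ) z := (hasFDerivAt_fst).const_sub _
  have hb := (h2.mul h3).smul_const B
  have hc := (h4.mul h3).smul_const C
  have ha := h1.smul_const A
  have htot := (ha.add hb).add hc
  have heq : Jmap A B C z =
      ((ContinuousLinearMap.snd ℝ ℝ ℝ).smulRight A +
        ((1/2 + z.1) • -ContinuousLinearMap.snd ℝ ℝ ℝ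
          + (1/2 - z.2) • ContinuousLinearMap.fst ℝ ℝ ℝ).smulRight B) +
      ((1/2 - z.1) • -ContinuousLinearMap.snd ℝ ℝ ℝ
          + (1/2 - z.2) • -ContinuousLinearMap.fst ℝ ℝ ℝ).smulRight C := by
    apply ContinuousLinearMap.ext
    intro w
    simp [Jmap, Prod.ext_iff, smul_eq_mul]
    constructor <;> ring
  rw [heq]
  exact htot

/-- The half-open square domain. -/
def sq : Set (ℝ × ℝ) := Set.Ioo (-(1:ℝ)/2) (1/2) ×ˢ Set.Ico (-(1:ℝ)/2) (1/2)

lemma measurableSet_sq : MeasurableSet sq := measurableSet_Ioo.prod measurableSet_Ico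

lemma det_Jmap (A B C : ℝ × ℝ) (area : ℝ)
    (h : ((B.1 - A.1) * (C.2 - A.2) - (C.1 - A.1) * (B.2 - A.2)) / 2 = -area) (z : ℝ × ℝ) :
    (Jmap A B C z).det = (1/2 - z.2) * (2 * area) := by
  rw [Jmap, det_clm]
  simp only [Prod.fst_sub, Prod.snd_sub, Prod.smul_fst, Prod.smul_snd, smul_eq_mul]
  linear_combination (-2 * (1/2 - z.2)) * h

lemma injOn_G (A B C : ℝ × ℝ) (area : ℝ) (hpos : 0 < area)
    (h : ((B.1 - A.1) * (C.2 - A.2) - (C.1 - A.1) * (B.2 - A.2)) / 2 = -area) :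
    Set.InjOn (fun z : ℝ × ℝ => squareToTriangleMap A B C z.1 z.2) sq := by
  intro z hz z' hz' hGz
  have hz2 : z.2 < 1/2 := hz.2.2
  have hz2' : z'.2 < 1/2 := hz'.2.2
  have e1 : (squareToTriangleMap A B C z.1 z.2).1 = (squareToTriangleMap A B C z'.1 z'.2).1 := by
    rw [show squareToTriangleMap A B C z.1 z.2 = squareToTriangleMap A B C z'.1 z'.2 from hGz]
  have e2 : (squareToTriangleMap A B C z.1 z.2).2 = (squareToTriangleMap A B C z'.1 z'.2).2 := by
    rw [show squareToTriangleMap A B C z.1 z.2 = squareToTriangleMap A B C z'.1 z'.2 from hGz]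
  rw [fst_map, fst_map] at e1
  rw [snd_map, snd_map] at e2
  have E1 : ((1/2 + z.1) * (1/2 - z.2) - (1/2 + z'.1) * (1/2 - z'.2)) * (B.1 - A.1)
      + ((1/2 - z.1) * (1/2 - z.2) - (1/2 - z'.1) * (1/2 - z'.2)) * (C.1 - A.1) = 0 := by
    linear_combination e1
  have E2 : ((1/2 + z.1) * (1/2 - z.2) - (1/2 + z'.1) * (1/2 - z'.2)) * (B.2 - A.2)
      + ((1/2 - z.1) * (1/2 - z.2) - (1/2 - z'.1) * (1/2 - z'.2)) * (C.2 - A.2) = 0 := by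
    linear_combination e2
  have hd : (B.1 - A.1) * (C.2 - A.2) - (C.1 - A.1) * (B.2 - A.2) = -2 * area := by
    linear_combination 2 * h
  have hX0 : (1/2 + z.1) * (1/2 - z.2) - (1/2 + z'.1) * (1/2 - z'.2) = 0 := by
    have h0 : ((1/2 + z.1) * (1/2 - z.2) - (1/2 + z'.1) * (1/2 - z'.2)) * (-2 * area) = 0 := by
      linear_combination (C.2 - A.2) * E1 - (C.1 - A.1) * E2
        - ((1/2 + z.1) * (1/2 - z.2) - (1/2 + z'.1) * (1/2 - z'.2)) * hd
    rcases mul_eq_zero.mp h0 with h1 | h1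
    · exact h1
    · linarith
  have hY0 : (1/2 - z.1) * (1/2 - z.2) - (1/2 - z'.1) * (1/2 - z'.2) = 0 := by
    have h0 : ((1/2 - z.1) * (1/2 - z.2) - (1/2 - z'.1) * (1/2 - z'.2)) * (-2 * area) = 0 := by
      linear_combination (B.1 - A.1) * E2 - (B.2 - A.2) * E1
        - ((1/2 - z.1) * (1/2 - z.2) - (1/2 - z'.1) * (1/2 - z'.2)) * hd
    rcases mul_eq_zero.mp h0 with h1 | h1
    · exact h1
    · linarith
  have hv : z.2 = z'.2 := by linear_combination - hX0 - hY0
  have hu : z.1 = z'.1 := by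
    rw [hv] at hX0
    have hne : (1/2 - z'.2) ≠ 0 := by intro h0; linarith
    have hfac : (z.1 - z'.1) * (1/2 - z'.2) = 0 := by linear_combination hX0
    rcases mul_eq_zero.mp hfac with h1 | h1
    · linarith
    · exact absurd h1 hne
  exact Prod.ext_iff.mpr ⟨hu, hv⟩

lemma image_G_subset (A B C : ℝ × ℝ) :
    (fun z : ℝ × ℝ => squareToTriangleMap A B C z.1 z.2) '' sq
      ⊆ (convexHull ℝ ({A, B, C} : Set (ℝ × ℝ)) : Set (ℝ × ℝ)) := by
  have hA : A ∈ (convexHull ℝ ({A, B, C} : Set (ℝ × ℝ)) : Set (ℝ × ℝ)) :=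
    subset_convexHull ℝ _ (by simp)
  have hB : B ∈ (convexHull ℝ ({A, B, C} : Set (ℝ × ℝ)) : Set (ℝ × ℝ)) :=
    subset_convexHull ℝ _ (by simp)
  have hC : C ∈ (convexHull ℝ ({A, B, C} : Set (ℝ × ℝ)) : Set (ℝ × ℝ)) :=
    subset_convexHull ℝ _ (by simp)
  have hconv : Convex ℝ (convexHull ℝ ({A, B, C} : Set (ℝ × ℝ)) : Set (ℝ × ℝ)) :=
    convex_convexHull ℝ _
  rintro _ ⟨z, hz, rfl⟩
  have h11 : -(1:ℝ)/2 < z.1 := hz.1.1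
  have h12 : z.1 < 1/2 := hz.1.2
  have h21 : -(1:ℝ)/2 ≤ z.2 := hz.2.1
  have h22 : z.2 < 1/2 := hz.2.2
  have hzmem := hconv hB hC (by linarith : (0:ℝ) ≤ 1/2 + z.1)
    (by linarith : (0:ℝ) ≤ 1/2 - z.1) (by ring)
  have hfin := hconv hA hzmem (by linarith : (0:ℝ) ≤ 1/2 + z.2)
    (by linarith : (0:ℝ) ≤ 1/2 - z.2) (by ring)
  show squareToTriangleMap A B C z.1 z.2 ∈ _
  have hrw : squareToTriangleMap A B C z.1 z.2
      = (1/2 + z.2) • A + (1/2 - z.2) • ((1/2 + z.1) • B + (1/2 - z.1) • C) := by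
    rw [squareToTriangleMap]
    module
  rw [hrw]
  exact hfin

lemma tri_diff_subset (A B C : ℝ × ℝ) :
    (convexHull ℝ ({A, B, C} : Set (ℝ × ℝ)) : Set (ℝ × ℝ))
        \ ((fun z : ℝ × ℝ => squareToTriangleMap A B C z.1 z.2) '' sq)
      ⊆ segment ℝ A B ∪ segment ℝ A C := by
  rintro x ⟨hxT, hxG⟩
  rw [show ({A, B, C} : Set (ℝ × ℝ)) = insert A {B, C} from rfl,
    convexHull_insert ⟨B, by simp⟩, convexJoin_singleton_left] at hxT
  simp only [Set.mem_iUnion] at hxT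
  obtain ⟨z, hz, hseg⟩ := hxT
  rw [convexHull_pair] at hz
  obtain ⟨c, d, hc, hd, hcd, rfl⟩ := hz
  obtain ⟨a, b, ha, hb, hab, rfl⟩ := hseg
  by_cases hb0 : b = 0
  · left
    have ha1 : a = 1 := by linarith
    rw [hb0, ha1]
    simp only [one_smul, zero_smul, add_zero]
    exact left_mem_segment ℝ A B
  have hbpos : 0 < b := lt_of_le_of_ne hb (Ne.symm hb0)
  by_cases hc0 : c = 0
  · right
    refine ⟨a, b, ha, hb, hab, ?_⟩
    have hd1 : d = 1 := by linarith
    rw [hc0, hd1]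
    module
  by_cases hc1 : c = 1
  · left
    refine ⟨a, b, ha, hb, hab, ?_⟩
    have hd0 : d = 0 := by linarith
    rw [hc1, hd0]
    module
  exfalso
  apply hxG
  have hcpos : 0 < c := lt_of_le_of_ne hc (Ne.symm hc0)
  have hclt : c < 1 := lt_of_le_of_ne (by linarith) hc1
  have halt : a < 1 := by linarith
  refine ⟨(c - 1/2, a - 1/2), ⟨⟨by norm_num; linarith, by norm_num; linarith⟩,
    ⟨by norm_num; linarith, by norm_num; linarith⟩⟩, ?_⟩
  show squareToTriangleMap A B C (c - 1/2) (a - 1/2) = _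
  rw [squareToTriangleMap]
  have hd' : d = 1 - c := by linarith
  have hb' : b = 1 - a := by linarith
  rw [hd', hb']
  module

lemma cv (A B C : ℝ × ℝ) (area : ℝ) (hpos : 0 < area)
    (h : ((B.1 - A.1) * (C.2 - A.2) - (C.1 - A.1) * (B.2 - A.2)) / 2 = -area)
    (f : ℝ × ℝ → ℝ) (hf : Continuous f) :
    ∫ x in (convexHull ℝ ({A, B, C} : Set (ℝ × ℝ)) : Set (ℝ × ℝ)), f x
      = ∫ u in (-(1:ℝ)/2)..(1/2), ∫ v in (-(1:ℝ)/2)..(1/2),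
          (2 * area * (1/2 - v)) * f (squareToTriangleMap A B C u v) := by
  have hG' : ∀ z ∈ sq, HasFDerivWithinAt (fun z : ℝ × ℝ => squareToTriangleMap A B C z.1 z.2)
      (Jmap A B C z) sq z := fun z _ => (hasFDerivAt_G A B C z).hasFDerivWithinAt
  have haeq : (fun z : ℝ × ℝ => squareToTriangleMap A B C z.1 z.2) '' sq
      =ᵐ[volume] (convexHull ℝ ({A, B, C} : Set (ℝ × ℝ)) : Set (ℝ × ℝ)) := by
    rw [MeasureTheory.ae_eq_set]
    constructor
    · rw [Set.diff_eq_empty.mpr (image_G_subset A B C)]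
      exact measure_empty
    · exact measure_mono_null (tri_diff_subset A B C)
        (measure_union_null (segment_null A B) (segment_null A C))
  rw [setIntegral_congr_set haeq.symm,
    integral_image_eq_integral_abs_det_fderiv_smul volume measurableSet_sq hG'
      (injOn_G A B C area hpos h) f]
  have hstep1 : ∫ z in sq, |(Jmap A B C z).det| • f (squareToTriangleMap A B C z.1 z.2)
      = ∫ z in sq, (2 * area * (1/2 - z.2)) * f (squareToTriangleMap A B C z.1 z.2) := by
    refine setIntegral_congr_fun measurableSet_sq (fun z hz => ?_)
    have hz2 : z.2 < 1/2 := hz.2.2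
    rw [det_Jmap A B C area h, abs_of_nonneg (by nlinarith), smul_eq_mul]
    ring
  rw [hstep1]
  have hFc : Continuous (fun z : ℝ × ℝ =>
      (2 * area * (1/2 - z.2)) * f (squareToTriangleMap A B C z.1 z.2)) := by
    apply Continuous.mul
    · fun_prop
    · apply hf.comp
      unfold squareToTriangleMap
      fun_prop
  have hint : IntegrableOn (fun z : ℝ × ℝ =>
      (2 * area * (1/2 - z.2)) * f (squareToTriangleMap A B C z.1 z.2)) sq volume := by
    refine (hFc.integrableOn_Icc (a := ((-(1:ℝ)/2, -(1:ℝ)/2))) (b := ((1/2, 1/2)))).mono_set ?_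
    rw [sq, ← Set.Icc_prod_Icc]
    exact Set.prod_mono Set.Ioo_subset_Icc_self Set.Ico_subset_Icc_self
  rw [sq] at hint ⊢
  rw [Measure.volume_eq_prod ℝ ℝ] at hint ⊢
  rw [MeasureTheory.setIntegral_prod _ hint]
  have hle : (-(1:ℝ)/2) ≤ 1/2 := by norm_num
  calc ∫ u in Set.Ioo (-(1:ℝ)/2) (1/2), ∫ v in Set.Ico (-(1:ℝ)/2) (1/2),
        (2 * area * (1/2 - v)) * f (squareToTriangleMap A B C u v)
      = ∫ u in Set.Ioo (-(1:ℝ)/2) (1/2), ∫ v in (-(1:ℝ)/2)..(1/2),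
        (2 * area * (1/2 - v)) * f (squareToTriangleMap A B C u v) := by
        refine setIntegral_congr_fun measurableSet_Ioo (fun u _ => ?_)
        rw [MeasureTheory.integral_Ico_eq_integral_Ioo,
          ← MeasureTheory.integral_Ioc_eq_integral_Ioo, ← intervalIntegral.integral_of_le hle]
    _ = ∫ u in (-(1:ℝ)/2)..(1/2), ∫ v in (-(1:ℝ)/2)..(1/2),
        (2 * area * (1/2 - v)) * f (squareToTriangleMap A B C u v) := by
        rw [← MeasureTheory.integral_Ioc_eq_integral_Ioo, ← intervalIntegral.integral_of_le hle]

lemma key (A B C : ℝ × ℝ) (area : ℝ) (hpos : 0 < area)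
    (h : ((B.1 - A.1) * (C.2 - A.2) - (C.1 - A.1) * (B.2 - A.2)) / 2 = -area)
    (uhat what vnode wnode : Fin 3 → ℝ)
    (hexact : ∀ q : MvPolynomial (Fin 2) ℝ, q.degreeOf 0 ≤ 2 → q.degreeOf 1 ≤ 2 →
      (∫ u in (-(1 : ℝ)/2)..(1/2), ∫ v in (-(1 : ℝ)/2)..(1/2),
          MvPolynomial.eval ![u, v] q * (2 * (1/2 - v)))
        = ∑ α : Fin 3, ∑ β : Fin 3,
            MvPolynomial.eval ![uhat α, vnode β] q * (2 * (1/2 - vnode β))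
              * what α * wnode β)
    (p : MvPolynomial (Fin 2) ℝ) (hp : p.totalDegree ≤ 2) :
    (∫ x in (convexHull ℝ ({A, B, C} : Set (ℝ × ℝ)) : Set (ℝ × ℝ)),
        MvPolynomial.eval ![x.1, x.2] p)
      = area * ∑ α : Fin 3, ∑ β : Fin 3,
          MvPolynomial.eval ![(squareToTriangleMap A B C (uhat α) (vnode β)).1,
            (squareToTriangleMap A B C (uhat α) (vnode β)).2] p
            * (2 * (1/2 - vnode β)) * what α * wnode β := by
  have hf : Continuous (fun x : ℝ × ℝ => MvPolynomial.eval ![x.1, x.2] p) := by continuity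
  rw [cv A B C area hpos h _ hf]
  have hq1 : (compPoly A B C p).degreeOf 0 ≤ 2 := (degreeOf_compPoly_le A B C p 0).trans hp
  have hq2 : (compPoly A B C p).degreeOf 1 ≤ 2 := (degreeOf_compPoly_le A B C p 1).trans hp
  have he := hexact (compPoly A B C p) hq1 hq2
  calc ∫ u in (-(1:ℝ)/2)..(1/2), ∫ v in (-(1:ℝ)/2)..(1/2),
        (2 * area * (1/2 - v)) * MvPolynomial.eval
          ![(squareToTriangleMap A B C u v).1, (squareToTriangleMap A B C u v).2] p
      = ∫ u in (-(1:ℝ)/2)..(1/2), ∫ v in (-(1:ℝ)/2)..(1/2),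
        area * (MvPolynomial.eval ![u, v] (compPoly A B C p) * (2 * (1/2 - v))) := by
        refine intervalIntegral.integral_congr (fun u _ => ?_)
        refine intervalIntegral.integral_congr (fun v _ => ?_)
        rw [eval_compPoly]
        ring
    _ = area * ∫ u in (-(1:ℝ)/2)..(1/2), ∫ v in (-(1:ℝ)/2)..(1/2),
        MvPolynomial.eval ![u, v] (compPoly A B C p) * (2 * (1/2 - v)) := by
        simp only [intervalIntegral.integral_const_mul]
    _ = area * ∑ α : Fin 3, ∑ β : Fin 3,
          MvPolynomial.eval ![(squareToTriangleMap A B C (uhat α) (vnode β)).1,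
            (squareToTriangleMap A B C (uhat α) (vnode β)).2] p
            * (2 * (1/2 - vnode β)) * what α * wnode β := by
        rw [he]
        congr 1
        refine Finset.sum_congr rfl (fun α _ => Finset.sum_congr rfl (fun β _ => ?_))
        rw [eval_compPoly]

end TriQuadAux

theorem triangle_quadrature_exact_for_quadratics
    (V₁ V₂ V₃ : ℝ × ℝ) (area : ℝ) (hpos : 0 < area)
    (horient : ((V₂.1 - V₁.1) * (V₃.2 - V₁.2) - (V₃.1 - V₁.1) * (V₂.2 - V₁.2)) / 2
      = -area)
    (harea : (volume ((convexHull ℝ) {V₁, V₂, V₃} : Set (ℝ × ℝ))).toReal = area)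
    (uhat what vnode wnode : Fin 3 → ℝ)
    (hexact : ∀ q : MvPolynomial (Fin 2) ℝ, q.degreeOf 0 ≤ 2 → q.degreeOf 1 ≤ 2 →
      (∫ u in (-(1 : ℝ)/2)..(1/2), ∫ v in (-(1 : ℝ)/2)..(1/2),
          MvPolynomial.eval ![u, v] q * (2 * (1/2 - v)))
        = ∑ α : Fin 3, ∑ β : Fin 3,
            MvPolynomial.eval ![uhat α, vnode β] q * (2 * (1/2 - vnode β))
              * what α * wnode β)
    (p : MvPolynomial (Fin 2) ℝ) (hp : p.totalDegree ≤ 2) :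
    (1 / area) * ∫ x in ((convexHull ℝ) {V₁, V₂, V₃} : Set (ℝ × ℝ)),
        MvPolynomial.eval ![x.1, x.2] p
      = ∑ i : Fin 3, ∑ α : Fin 3, ∑ β : Fin 3,
          MvPolynomial.eval
            ![(squareToTriangleMap (![V₁, V₂, V₃] i) (![V₂, V₃, V₁] i) (![V₃, V₁, V₂] i)
                (uhat α) (vnode β)).1,
              (squareToTriangleMap (![V₁, V₂, V₃] i) (![V₂, V₃, V₁] i) (![V₃, V₁, V₂] i)
                (uhat α) (vnode β)).2] p
            * ((2/3) * (1/2 - vnode β) * what α * wnode β) := by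
  have horient2 : ((V₃.1 - V₂.1) * (V₁.2 - V₂.2) - (V₁.1 - V₂.1) * (V₃.2 - V₂.2)) / 2
      = -area := by linear_combination horient
  have horient3 : ((V₁.1 - V₃.1) * (V₂.2 - V₃.2) - (V₂.1 - V₃.1) * (V₁.2 - V₃.2)) / 2
      = -area := by linear_combination horient
  have hset2 : ({V₂, V₃, V₁} : Set (ℝ × ℝ)) = {V₁, V₂, V₃} := by
    ext x; simp only [Set.mem_insert_iff, Set.mem_singleton_iff]; tauto
  have hset3 : ({V₃, V₁, V₂} : Set (ℝ × ℝ)) = {V₁, V₂, V₃} := by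
    ext x; simp only [Set.mem_insert_iff, Set.mem_singleton_iff]; tauto
  have k1 := TriQuadAux.key V₁ V₂ V₃ area hpos horient uhat what vnode wnode hexact p hp
  have k2 := TriQuadAux.key V₂ V₃ V₁ area hpos horient2 uhat what vnode wnode hexact p hp
  have k3 := TriQuadAux.key V₃ V₁ V₂ area hpos horient3 uhat what vnode wnode hexact p hp
  rw [hset2] at k2
  rw [hset3] at k3
  rw [div_mul_eq_mul_div, one_mul, div_eq_iff (ne_of_gt hpos)]
  simp only [Fin.sum_univ_three, Matrix.cons_val_zero, Matrix.cons_val_one, Matrix.head_cons,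
    Matrix.cons_val_two, Matrix.tail_cons] at k1 k2 k3 ⊢
  linear_combination (k1 + k2 + k3) / 3
end
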